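/- Fix 0 < α < 1 and b > 0 with b(1−α)/8 > ln 2, and let (G_n) be a sequence of finite simple graphs, where G_n has n vertices and C_max(G_n) ≥ n²/8. If the inverse temperature scales as β_n = b/n, then under the Gibbs measure P_{β_n} on {±1}^n associated to G_n, P_{β_n}( C(σ) ≤ α·C_max(G_n) ) ≤ exp( n·( ln 2 − b(1−α)/8 ) ), which tends to 0 exponentially in n. -/

import Mathlib

open Finset Filter

/-- `spinDiff σ e = true` iff the two endpoints of the unordered pair `e` carry
opposite spins under the spin configuration `σ : {±1}ⁿ` (encoded by `Bool`). -/
def spinDiff {n : ℕ} (σ : Fin n → Bool) : Sym2 (Fin n) → Bool :=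
  Sym2.lift ⟨fun i j => xor (σ i) (σ j), fun _ _ => Bool.xor_comm _ _⟩

open Classical in
/-- The cut value `C(σ)` of a spin configuration `σ ∈ {±1}ⁿ` for the graph `G`:
the number of edges of `G` whose endpoints carry opposite spins. -/
noncomputable def gCut {n : ℕ} (G : SimpleGraph (Fin n)) (σ : Fin n → Bool) : ℕ :=
  (Finset.univ.filter
    (fun e : Sym2 (Fin n) => e ∈ G.edgeSet ∧ spinDiff σ e = true)).card

/-- The maximum cut value `C_max(G)` of the graph `G`. -/
noncomputable def maxCut {n : ℕ} (G : SimpleGraph (Fin n)) : ℕ :=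
  Finset.univ.sup (fun σ : Fin n → Bool => gCut G σ)

open Classical in
/-- The Gibbs probability at inverse temperature `β` of an event `A` on spin
configurations: `P_β(A) = (∑_{σ ∈ A} e^{β C(σ)}) / (∑_σ e^{β C(σ)})`. -/
noncomputable def gibbsProb {n : ℕ} (G : SimpleGraph (Fin n)) (β : ℝ)
    (A : (Fin n → Bool) → Prop) : ℝ :=
  (∑ σ ∈ Finset.univ.filter A, Real.exp (β * gCut G σ)) /
    (∑ σ : Fin n → Bool, Real.exp (β * gCut G σ))

/-! The partition function is at least the weight `e^{β C_max}` of a maximum cut, while the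
event `C(σ) ≤ α C_max` consists of at most `2ⁿ` configurations of weight at most `e^{β α C_max}`.
Hence its probability is at most `2ⁿ e^{-β (1-α) C_max}`, and for `β = b/n` and
`C_max ≥ n²/8` the exponent is at most `-n b (1-α)/8`. -/

open Real

lemma sum_exp_filter_div_sum_exp_le {Ω : Type*} [Fintype Ω] (A : Ω → Prop) [DecidablePred A]
    (f : Ω → ℝ) {β t : ℝ} (hβ : 0 ≤ β) (hA : ∀ σ, A σ → f σ ≤ t) (σ₀ : Ω) :
    (∑ σ ∈ univ.filter A, exp (β * f σ)) / ∑ σ, exp (β * f σ) ≤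
      Fintype.card Ω * exp (β * (t - f σ₀)) := by
  have hnum : ∑ σ ∈ univ.filter A, exp (β * f σ) ≤ Fintype.card Ω * exp (β * t) :=
    calc ∑ σ ∈ univ.filter A, exp (β * f σ)
        ≤ ∑ _σ ∈ univ.filter A, exp (β * t) :=
          sum_le_sum fun σ hσ =>
            exp_le_exp.2 (mul_le_mul_of_nonneg_left (hA σ (mem_filter.1 hσ).2) hβ)
      _ = #(univ.filter A) * exp (β * t) := by rw [sum_const, nsmul_eq_mul]
      _ ≤ Fintype.card Ω * exp (β * t) := by gcongr; exact card_le_univ _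
  have hden : exp (β * f σ₀) ≤ ∑ σ, exp (β * f σ) :=
    single_le_sum (fun σ _ => (exp_pos (β * f σ)).le) (mem_univ σ₀)
  calc (∑ σ ∈ univ.filter A, exp (β * f σ)) / ∑ σ, exp (β * f σ)
      ≤ Fintype.card Ω * exp (β * t) / exp (β * f σ₀) :=
        div_le_div₀ (by positivity) hnum (exp_pos _) hden
    _ = Fintype.card Ω * exp (β * (t - f σ₀)) := by rw [mul_sub, exp_sub, mul_div_assoc]

lemma exists_gCut_eq_maxCut {n : ℕ} (G : SimpleGraph (Fin n)) :
    ∃ σ, gCut G σ = maxCut G := by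
  obtain ⟨σ, -, hσ⟩ := exists_mem_eq_sup univ univ_nonempty (gCut G)
  exact ⟨σ, hσ.symm⟩

lemma gibbsProb_nonneg {n : ℕ} (G : SimpleGraph (Fin n)) (β : ℝ) (A : (Fin n → Bool) → Prop) :
    0 ≤ gibbsProb G β A := by
  unfold gibbsProb
  positivity

lemma gibbsProb_gCut_le_le {n : ℕ} (G : SimpleGraph (Fin n)) {β : ℝ} (hβ : 0 ≤ β) (c : ℝ) :
    gibbsProb G β (fun σ => (gCut G σ : ℝ) ≤ c) ≤ 2 ^ n * exp (β * (c - maxCut G)) := by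
  obtain ⟨σ₀, hσ₀⟩ := exists_gCut_eq_maxCut G
  have h := sum_exp_filter_div_sum_exp_le (fun σ => (gCut G σ : ℝ) ≤ c) (fun σ => (gCut G σ : ℝ))
    hβ (fun _ h => h) σ₀
  simpa only [gibbsProb, Fintype.card_fun, Fintype.card_bool, Fintype.card_fin, Nat.cast_pow,
    Nat.cast_ofNat, hσ₀] using h

lemma gibbsProb_gCut_le_mul_maxCut_le_exp {α b : ℝ} (hα1 : α < 1) (hb : 0 < b) {n : ℕ}
    (hn : 0 < n) (G : SimpleGraph (Fin n)) (hG : (n : ℝ) ^ 2 / 8 ≤ maxCut G) :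
    gibbsProb G (b / n) (fun σ => (gCut G σ : ℝ) ≤ α * maxCut G) ≤
      exp (n * (log 2 - b * (1 - α) / 8)) := by
  have hnR : (0 : ℝ) < n := Nat.cast_pos.2 hn
  have hexp : b / n * (α * maxCut G - maxCut G) ≤ -(n * (b * (1 - α) / 8)) :=
    calc b / n * (α * maxCut G - maxCut G)
        = -(b / n * (1 - α) * maxCut G) := by ring
      _ ≤ -(b / n * (1 - α) * (n ^ 2 / 8)) := by gcongr
      _ = -(n * (b * (1 - α) / 8)) := by field_simp
  calc gibbsProb G (b / n) (fun σ => (gCut G σ : ℝ) ≤ α * maxCut G)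
      ≤ 2 ^ n * exp (b / n * (α * maxCut G - maxCut G)) :=
        gibbsProb_gCut_le_le G (div_pos hb hnR).le _
    _ ≤ exp (n * log 2) * exp (-(n * (b * (1 - α) / 8))) := by
        rw [exp_nat_mul, exp_log two_pos]
        gcongr
    _ = exp (n * (log 2 - b * (1 - α) / 8)) := by rw [← exp_add]; ring_nf

theorem gibbs_beats_threshold_scaled_temperature_general (α b : ℝ)
    (hα1 : α < 1) (hb : 0 < b) (hbig : Real.log 2 < b * (1 - α) / 8)
    (G : ∀ n : ℕ, SimpleGraph (Fin n))
    (hG : ∀ᶠ n : ℕ in Filter.atTop, (n : ℝ) ^ 2 / 8 ≤ (maxCut (G n) : ℝ)) :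
    (∀ᶠ n : ℕ in Filter.atTop,
        gibbsProb (G n) (b / n)
            (fun σ => (gCut (G n) σ : ℝ) ≤ α * (maxCut (G n) : ℝ)) ≤
          Real.exp ((n : ℝ) * (Real.log 2 - b * (1 - α) / 8))) ∧
      Filter.Tendsto
        (fun n : ℕ =>
          gibbsProb (G n) (b / n)
            (fun σ => (gCut (G n) σ : ℝ) ≤ α * (maxCut (G n) : ℝ)))
        Filter.atTop (nhds 0) := by
  have hbound : ∀ᶠ n : ℕ in atTop,
      gibbsProb (G n) (b / n) (fun σ => (gCut (G n) σ : ℝ) ≤ α * (maxCut (G n) : ℝ)) ≤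
        exp (n * (log 2 - b * (1 - α) / 8)) := by
    filter_upwards [hG, eventually_gt_atTop 0] with n hGn hn
    exact gibbsProb_gCut_le_mul_maxCut_le_exp hα1 hb hn (G n) hGn
  have hdecay : Tendsto (fun n : ℕ => exp (n * (log 2 - b * (1 - α) / 8))) atTop (nhds 0) :=
    tendsto_exp_atBot.comp
      (tendsto_natCast_atTop_atTop.atTop_mul_const_of_neg (by linarith))
  exact ⟨hbound, squeeze_zero' (.of_forall fun n => gibbsProb_nonneg _ _ _) hbound hdecay⟩

/-- Fix `0 < α < 1` and `b > 0` with `b(1-α)/8 > ln 2`, and a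
sequence of graphs `G n` on `n` vertices with `C_max(G n) ≥ n²/8` (for all
large `n`; requiring it for every `n` would be vacuous since graphs on one
vertex have no edges).  If the inverse temperature scales as `β_n = b/n`, then
`P_{β_n}(C(σ) ≤ α·C_max(G n)) ≤ exp(n·(ln 2 - b(1-α)/8))`, which tends to `0`
exponentially in `n`. -/
theorem gibbs_beats_threshold_scaled_temperature (α b : ℝ) (hα0 : 0 < α)
    (hα1 : α < 1) (hb : 0 < b) (hbig : Real.log 2 < b * (1 - α) / 8)
    (G : ∀ n : ℕ, SimpleGraph (Fin n))
    (hG : ∀ᶠ n : ℕ in Filter.atTop, (n : ℝ) ^ 2 / 8 ≤ (maxCut (G n) : ℝ)) :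
    (∀ᶠ n : ℕ in Filter.atTop,
        gibbsProb (G n) (b / n)
            (fun σ => (gCut (G n) σ : ℝ) ≤ α * (maxCut (G n) : ℝ)) ≤
          Real.exp ((n : ℝ) * (Real.log 2 - b * (1 - α) / 8))) ∧
      Filter.Tendsto
        (fun n : ℕ =>
          gibbsProb (G n) (b / n)
            (fun σ => (gCut (G n) σ : ℝ) ≤ α * (maxCut (G n) : ℝ)))
        Filter.atTop (nhds 0) :=
  gibbs_beats_threshold_scaled_temperature_general α b hα1 hb hbig G hG
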